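/- arXiv:1408.4103 — 4 statements merged into one kernel-verified Lean document; each statement's English description precedes it below -/
import Mathlib

section
/- Under the assumptions on b and for σ ≠ 0, the integrals ∫₀ᵘ (v σ²)/(2 B(v)) dv and ∫ᵤ¹ ((1-v) σ²)/(2 B(v)) dv are finite for every u ∈ (0,1), so that Φ(u) := ∫₀ᵘ (v σ²)/(2 B(v)) dv − ∫ᵤ¹ ((1-v) σ²)/(2 B(v)) dv is well defined. -/
/-!
`B v = ∫₀ᵛ b` is strictly concave on `[0,1]`, since `B' = b` is strictly decreasing, and vanishes
at `0` and `1`; hence `B > 0` on `(0,1)`. By concavity the chord slope `B v / v` from `0` is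
antitone, so `B v / v ≥ B u / u > 0` on `(0,u]` and `v / B v` stays bounded there; symmetrically
`(1 - v) / B v ≤ (1 - u) / B u` on `[u,1)`. Bounded continuous functions on a bounded open interval
are integrable.
-/

open MeasureTheory Set intervalIntegral

theorem ConcaveOn.secant_anti {𝕜 : Type*} [Field 𝕜] [LinearOrder 𝕜] [IsStrictOrderedRing 𝕜]
    {s : Set 𝕜} {f : 𝕜 → 𝕜} (hf : ConcaveOn 𝕜 s f) {a x y : 𝕜} (ha : a ∈ s) (hx : x ∈ s)
    (hy : y ∈ s) (hxa : x ≠ a) (hya : y ≠ a) (hxy : x ≤ y) :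
    (f y - f a) / (y - a) ≤ (f x - f a) / (x - a) := by
  have h := hf.neg.secant_mono ha hx hy hxa hya hxy
  simp only [Pi.neg_apply, ← neg_sub', neg_div] at h
  linarith

theorem intervalIntegrable_of_continuousOn_Ioo_of_norm_le {E : Type*} [NormedAddCommGroup E]
    {f : ℝ → E} {a b : ℝ} (hab : a ≤ b) (hf : ContinuousOn f (Ioo a b)) (M : ℝ)
    (hM : ∀ x ∈ Ioo a b, ‖f x‖ ≤ M) : IntervalIntegrable f volume a b := by
  rw [intervalIntegrable_iff_integrableOn_Ioo_of_le hab]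
  exact .of_bound measure_Ioo_lt_top (hf.aestronglyMeasurable measurableSet_Ioo) M
    ((ae_restrict_iff' measurableSet_Ioo).2 (.of_forall hM))

section Concave

variable {f : ℝ → ℝ} {a u : ℝ}

theorem ConcaveOn.intervalIntegrable_sub_left_div (hau : a < u) (hf : ConcaveOn ℝ (Icc a u) f)
    (hfc : ContinuousOn f (Ioo a u)) (hfa : f a = 0) (hfu : 0 < f u) :
    IntervalIntegrable (fun v => (v - a) / f v) volume a u := by
  have hslope : ∀ v ∈ Ioo a u, f u / (u - a) ≤ f v / (v - a) := fun v hv => by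
    simpa [hfa] using hf.secant_anti (left_mem_Icc.2 hau.le) (Ioo_subset_Icc_self hv)
      (right_mem_Icc.2 hau.le) hv.1.ne' hau.ne' hv.2.le
  have hpos : ∀ v ∈ Ioo a u, 0 < f v := fun v hv => by
    have := (div_pos hfu (sub_pos.2 hau)).trans_le (hslope v hv)
    exact (div_pos_iff_of_pos_right (sub_pos.2 hv.1)).1 this
  refine intervalIntegrable_of_continuousOn_Ioo_of_norm_le hau.le
    (((continuous_id.sub continuous_const).continuousOn).div hfc fun v hv => (hpos v hv).ne')
    ((u - a) / f u) fun v hv => ?_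
  have hva := sub_pos.2 hv.1
  rw [Real.norm_of_nonneg (div_nonneg hva.le (hpos v hv).le), ← inv_div, ← inv_div (f u)]
  exact inv_anti₀ (div_pos hfu (sub_pos.2 hau)) (hslope v hv)

theorem ConcaveOn.intervalIntegrable_sub_right_div {c : ℝ} (huc : u < c)
    (hf : ConcaveOn ℝ (Icc u c) f) (hfc : ContinuousOn f (Ioo u c)) (hfc0 : f c = 0)
    (hfu : 0 < f u) : IntervalIntegrable (fun v => (c - v) / f v) volume u c := by
  have hslope : ∀ v ∈ Ioo u c, f u / (c - u) ≤ f v / (c - v) := fun v hv => by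
    have h := hf.secant_anti (right_mem_Icc.2 huc.le) (left_mem_Icc.2 huc.le)
      (Ioo_subset_Icc_self hv) huc.ne hv.2.ne hv.1.le
    rw [hfc0, sub_zero, sub_zero, ← neg_sub c, ← neg_sub c, div_neg, div_neg] at h
    exact neg_le_neg_iff.1 h
  have hpos : ∀ v ∈ Ioo u c, 0 < f v := fun v hv => by
    have := (div_pos hfu (sub_pos.2 huc)).trans_le (hslope v hv)
    exact (div_pos_iff_of_pos_right (sub_pos.2 hv.2)).1 this
  refine intervalIntegrable_of_continuousOn_Ioo_of_norm_le huc.le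
    (((continuous_const.sub continuous_id).continuousOn).div hfc fun v hv => (hpos v hv).ne')
    ((c - u) / f u) fun v hv => ?_
  have hcv := sub_pos.2 hv.2
  rw [Real.norm_of_nonneg (div_nonneg hcv.le (hpos v hv).le), ← inv_div, ← inv_div (f u)]
  exact inv_anti₀ (div_pos hfu (sub_pos.2 huc)) (hslope v hv)

end Concave

theorem ContinuousOn.continuousOn_primitive_Icc {b : ℝ → ℝ} {a c : ℝ} (hac : a ≤ c)
    (hcont : ContinuousOn b (Icc a c)) : ContinuousOn (fun v => ∫ w in a..v, b w) (Icc a c) := by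
  simpa [uIcc_of_le hac] using
    continuousOn_primitive_interval' (hcont.intervalIntegrable_of_Icc hac) left_mem_uIcc

theorem strictConcaveOn_primitive_of_strictAntiOn {b : ℝ → ℝ} {a c : ℝ}
    (hcont : ContinuousOn b (Icc a c)) (hanti : StrictAntiOn b (Icc a c)) :
    StrictConcaveOn ℝ (Icc a c) (fun v => ∫ w in a..v, b w) := by
  rcases le_or_gt a c with hac | hca
  · refine StrictAntiOn.strictConcaveOn_of_deriv (convex_Icc a c)
      (hcont.continuousOn_primitive_Icc hac) ?_
    rw [interior_Icc]
    refine (hanti.mono Ioo_subset_Icc_self).congr fun v hv => ?_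
    exact (deriv_integral_right
      (hcont.mono (uIcc_subset_Icc (left_mem_Icc.2 hac) (Ioo_subset_Icc_self hv))).intervalIntegrable
      ((hcont.mono Ioo_subset_Icc_self).stronglyMeasurableAtFilter isOpen_Ioo v hv)
      (hcont.continuousAt (Icc_mem_nhds hv.1 hv.2))).symm
  · rw [Icc_eq_empty_of_lt hca]
    exact ⟨convex_empty, fun x hx => hx.elim⟩

theorem stmt_4_general (b : ℝ → ℝ) (σ : ℝ)
    (hcont : ContinuousOn b (Set.Icc 0 1))
    (hanti : StrictAntiOn b (Set.Icc 0 1))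
    (hB1 : ∫ v in (0:ℝ)..1, b v = 0) :
    ∀ u ∈ Set.Ioo (0:ℝ) 1,
      IntervalIntegrable (fun v => v * σ^2 / (2 * ∫ w in (0:ℝ)..v, b w)) MeasureTheory.volume 0 u ∧
      IntervalIntegrable (fun v => (1 - v) * σ^2 / (2 * ∫ w in (0:ℝ)..v, b w)) MeasureTheory.volume u 1 := by
  intro u hu
  have hBc := hcont.continuousOn_primitive_Icc zero_le_one
  have hconc := strictConcaveOn_primitive_of_strictAntiOn hcont hanti
  have hBu : 0 < ∫ w in (0:ℝ)..u, b w := by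
    simpa [hB1] using hconc.lt_on_openSegment (left_mem_Icc.2 zero_le_one)
      (right_mem_Icc.2 zero_le_one) zero_ne_one (by rwa [openSegment_eq_Ioo zero_lt_one])
  have hleft : IntervalIntegrable (fun v => (v - 0) / ∫ w in (0:ℝ)..v, b w) volume 0 u :=
    (hconc.concaveOn.subset (Icc_subset_Icc_right hu.2.le) (convex_Icc 0 u)
      ).intervalIntegrable_sub_left_div hu.1
      (hBc.mono (Ioo_subset_Icc_self.trans (Icc_subset_Icc_right hu.2.le))) integral_same hBu
  have hright : IntervalIntegrable (fun v => (1 - v) / ∫ w in (0:ℝ)..v, b w) volume u 1 :=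
    (hconc.concaveOn.subset (Icc_subset_Icc_left hu.1.le) (convex_Icc u 1)
      ).intervalIntegrable_sub_right_div hu.2
      (hBc.mono (Ioo_subset_Icc_self.trans (Icc_subset_Icc_left hu.1.le))) hB1 hBu
  constructor
  · convert hleft.const_mul (σ ^ 2 / 2) using 1
    funext v; ring
  · convert hright.const_mul (σ ^ 2 / 2) using 1
    funext v; ring

theorem stmt_4 (b : ℝ → ℝ) (σ : ℝ) (hσ : σ ≠ 0)
    (hcont : ContinuousOn b (Set.Icc 0 1))
    (hanti : StrictAntiOn b (Set.Icc 0 1))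
    (hB1 : ∫ v in (0:ℝ)..1, b v = 0) :
    ∀ u ∈ Set.Ioo (0:ℝ) 1,
      IntervalIntegrable (fun v => v * σ^2 / (2 * ∫ w in (0:ℝ)..v, b w)) MeasureTheory.volume 0 u ∧
      IntervalIntegrable (fun v => (1 - v) * σ^2 / (2 * ∫ w in (0:ℝ)..v, b w)) MeasureTheory.volume u 1 :=
  stmt_4_general b σ hcont hanti hB1
end

section
/- As u ↓ 0, Φ(u) ~ (σ²/(2 b(0))) · log u, and as u ↑ 1, Φ(u) ~ (σ²/(2 b(1))) · log(1-u); i.e. the corresponding ratios tend to 1. -/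
/-!
Write `B v = ∫ w in 0..v, b w`. Since `b` decreases and `B 1 = 0`, `B > 0` on `(0, 1)` and
`b 0 > 0 > b 1`. The two integrands of `Φ` add up to the weight `σ² / (2 B)`, so
`Φ u = Φ (1/2) + ∫ v in 1/2..u, σ² / (2 B v)`. Near `0`, `B v ~ b 0 * v`, so the integrand is
`~ σ² / (2 b 0 v)` and its integral grows like `σ² / (2 b 0) * log u`, which swamps the constant
`Φ (1/2)`. The endpoint `1` is reduced to `0` by the reflection `b ↦ -b (1 - ·)`, which preserves
the hypotheses and turns `B` into `B (1 - ·)`.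
-/

open Filter Set MeasureTheory Topology intervalIntegral

theorem intervalIntegrable_of_continuousOn_Ioc_of_tendsto {E : Type*} [NormedAddCommGroup E]
    {f : ℝ → E} {a b : ℝ} {c : E} (hab : a < b) (hf : ContinuousOn f (Ioc a b))
    (hlim : Tendsto f (𝓝[>] a) (𝓝 c)) : IntervalIntegrable f volume a b := by
  classical
  have hext : ContinuousOn (Function.update f a c) (Icc a b) := by
    rw [continuousOn_update_iff, Icc_sdiff_left, nhdsWithin_Ioc_eq_nhdsGT hab]
    exact ⟨hf, fun _ => hlim⟩
  rw [intervalIntegrable_iff_integrableOn_Ioc_of_le hab.le]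
  exact (hext.integrableOn_Icc.mono_set Ioc_subset_Icc_self).congr_fun
    (fun x hx => Function.update_of_ne hx.1.ne' ..) measurableSet_Ioc

theorem abs_integral_sub_mul_log_le {ψ : ℝ → ℝ} {u δ c ε : ℝ} (hu : 0 < u) (huδ : u ≤ δ)
    (hψ : IntervalIntegrable ψ volume u δ) (hclose : ∀ v ∈ Ioc u δ, |v * ψ v - c| ≤ ε) :
    |(∫ v in u..δ, ψ v) - c * Real.log (δ / u)| ≤ ε * Real.log (δ / u) := by
  have hinv : ∀ e : ℝ, (∫ v in u..δ, e * v⁻¹) = e * Real.log (δ / u) := fun e => by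
    rw [intervalIntegral.integral_const_mul, integral_inv_of_pos hu (hu.trans_le huδ)]
  have hinvi : IntervalIntegrable (fun v : ℝ => v⁻¹) volume u δ :=
    intervalIntegral.intervalIntegrable_inv (fun v hv => by
      rw [uIcc_of_le huδ] at hv; exact (hu.trans_le hv.1).ne') (continuousOn_id)
  rw [← hinv c, ← hinv ε, ← intervalIntegral.integral_sub hψ (hinvi.const_mul c),
    ← Real.norm_eq_abs]
  refine intervalIntegral.norm_integral_le_of_norm_le huδ (ae_of_all volume fun v hv => ?_)
    (hinvi.const_mul ε)
  have hv0 : 0 < v := hu.trans hv.1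
  rw [Real.norm_eq_abs, show ψ v - c * v⁻¹ = (v * ψ v - c) * v⁻¹ by field_simp,
    abs_mul, abs_inv, abs_of_pos hv0]
  exact mul_le_mul_of_nonneg_right (hclose v hv) (inv_nonneg.2 hv0.le)

theorem isLittleO_integral_sub_mul_log {ψ : ℝ → ℝ} {a c : ℝ} (ha : 0 < a)
    (hψ : ContinuousOn ψ (Ioc 0 a)) (hlim : Tendsto (fun v => v * ψ v) (𝓝[>] 0) (𝓝 c)) :
    (fun u => (∫ v in a..u, ψ v) - c * Real.log u) =o[𝓝[>] 0] Real.log := by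
  refine Asymptotics.IsLittleO.of_bound fun ε hε => ?_
  obtain ⟨δ₀, hδ₀, hclose⟩ := mem_nhdsGT_iff_exists_Ioc_subset.1
    (Metric.tendsto_nhds.1 hlim (ε / 2) (half_pos hε))
  set δ := min δ₀ (min a 1)
  have hδ : 0 < δ := lt_min hδ₀ (lt_min ha one_pos)
  have hδa : δ ≤ a := (min_le_right _ _).trans (min_le_left _ _)
  have hδ1 : δ ≤ 1 := (min_le_right _ _).trans (min_le_right _ _)
  have hconst := (Asymptotics.isLittleO_const_left
    (c := (∫ v in a..δ, ψ v) - c * Real.log δ)).2 (Or.inr <|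
      tendsto_abs_atBot_atTop.comp Real.tendsto_log_nhdsGT_zero) |>.bound (half_pos hε)
  filter_upwards [hconst, Ioo_mem_nhdsGT hδ] with u hconst ⟨hu, huδ⟩
  have hψi : ∀ s ∈ Icc u a, ∀ t ∈ Icc u a, IntervalIntegrable ψ volume s t :=
    fun s hs t ht => (hψ.mono ((uIcc_subset_Icc hs ht).trans
      fun v hv => ⟨hu.trans_le hv.1, hv.2⟩)).intervalIntegrable
  have hnear := abs_integral_sub_mul_log_le hu huδ.le
    (hψi u ⟨le_rfl, huδ.le.trans hδa⟩ δ ⟨huδ.le, hδa⟩)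
    fun v hv => (hclose ⟨hu.trans hv.1, hv.2.trans (min_le_left _ _)⟩).le
  have hsplit := integral_add_adjacent_intervals
    (hψi a ⟨huδ.le.trans hδa, le_rfl⟩ u ⟨le_rfl, huδ.le.trans hδa⟩)
    (hψi u ⟨le_rfl, huδ.le.trans hδa⟩ δ ⟨huδ.le, hδa⟩)
  have hdecomp : (∫ v in a..u, ψ v) - c * Real.log u
      = ((∫ v in a..δ, ψ v) - c * Real.log δ)
        - ((∫ v in u..δ, ψ v) - c * Real.log (δ / u)) := by
    rw [Real.log_div hδ.ne' hu.ne', ← hsplit]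
    ring
  have hlog_div : Real.log (δ / u) ≤ ‖Real.log u‖ := by
    rw [Real.log_div hδ.ne' hu.ne', Real.norm_eq_abs,
      abs_of_neg (Real.log_neg hu (huδ.trans_le hδ1))]
    linarith [Real.log_nonpos hδ.le hδ1]
  rw [hdecomp]
  calc _ ≤ ‖(∫ v in a..δ, ψ v) - c * Real.log δ‖
          + ‖(∫ v in u..δ, ψ v) - c * Real.log (δ / u)‖ := norm_sub_le _ _
    _ ≤ ε / 2 * ‖Real.log u‖ + ε / 2 * ‖Real.log u‖ :=
        add_le_add hconst (hnear.trans (mul_le_mul_of_nonneg_left hlog_div (half_pos hε).le))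
    _ = ε * ‖Real.log u‖ := by ring

theorem tendsto_integral_div_log_of_tendsto_mul {ψ : ℝ → ℝ} {a c : ℝ} (ha : 0 < a)
    (hψ : ContinuousOn ψ (Ioc 0 a)) (hlim : Tendsto (fun v => v * ψ v) (𝓝[>] 0) (𝓝 c)) :
    Tendsto (fun u => (∫ v in a..u, ψ v) / Real.log u) (𝓝[>] 0) (𝓝 c) := by
  have h := ((isLittleO_integral_sub_mul_log ha hψ hlim).tendsto_div_nhds_zero).add_const c
  rw [zero_add] at h
  refine h.congr' ?_
  filter_upwards [Ioo_mem_nhdsGT one_pos] with u hu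
  have := (Real.log_neg hu.1 hu.2).ne
  field_simp
  ring

theorem tendsto_add_div_mul_of_tendsto_div {α : Type*} {l : Filter α} {I L : α → ℝ} {c : ℝ}
    (K : ℝ) (hc : c ≠ 0) (hL : Tendsto (fun x => (L x)⁻¹) l (𝓝 0))
    (hI : Tendsto (fun x => I x / L x) l (𝓝 c)) :
    Tendsto (fun x => (K + I x) / (c * L x)) l (𝓝 1) := by
  have h := ((hL.const_mul K).add hI).div_const c
  rw [mul_zero, zero_add, div_self hc] at h
  refine h.congr fun x => ?_
  rw [div_eq_mul_inv, div_eq_mul_inv, div_eq_mul_inv, mul_inv]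
  ring

theorem tendsto_one_sub_nhdsLT_one : Tendsto (fun u : ℝ => 1 - u) (𝓝[<] 1) (𝓝[>] 0) := by
  have h := (map_subLeft_nhdsLT (c := (1:ℝ)) (a := 1)).le
  rwa [sub_self] at h

theorem integral_sub_integral_eq_add_integral_add {f g : ℝ → ℝ} {a m u b : ℝ}
    (hf₁ : IntervalIntegrable f volume a m) (hf₂ : IntervalIntegrable f volume m u)
    (hg₁ : IntervalIntegrable g volume m b) (hg₂ : IntervalIntegrable g volume m u) :
    (∫ v in a..u, f v) - ∫ v in u..b, g v
      = ((∫ v in a..m, f v) - ∫ v in m..b, g v) + ∫ v in m..u, f v + g v := by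
  rw [integral_add hf₂ hg₂, ← integral_add_adjacent_intervals hf₁ hf₂,
    ← integral_add_adjacent_intervals hg₂.symm hg₁, integral_symm m u]
  ring

structure IsBalancedDrift (b : ℝ → ℝ) : Prop where
  continuousOn : ContinuousOn b (Icc 0 1)
  strictAntiOn : StrictAntiOn b (Icc 0 1)
  integral_eq_zero : ∫ v in (0:ℝ)..1, b v = 0

namespace IsBalancedDrift

variable {b : ℝ → ℝ}

theorem intervalIntegrable (hb : IsBalancedDrift b) {s t : ℝ} (hs : s ∈ Icc (0:ℝ) 1)
    (ht : t ∈ Icc (0:ℝ) 1) : IntervalIntegrable b volume s t :=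
  (hb.continuousOn.mono (uIcc_subset_Icc hs ht)).intervalIntegrable

theorem integral_pos (hb : IsBalancedDrift b) {v : ℝ} (hv : v ∈ Ioo (0:ℝ) 1) :
    0 < ∫ w in (0:ℝ)..v, b w := by
  have hv' : v ∈ Icc (0:ℝ) 1 := Ioo_subset_Icc_self hv
  have h0 : (0:ℝ) ∈ Icc (0:ℝ) 1 := left_mem_Icc.2 zero_le_one
  have h1 : (1:ℝ) ∈ Icc (0:ℝ) 1 := right_mem_Icc.2 zero_le_one
  rcases le_or_gt 0 (b v) with hbv | hbv
  · refine intervalIntegral_pos_of_pos_on (hb.intervalIntegrable h0 hv') (fun x hx => ?_) hv.1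
    exact hbv.trans_lt (hb.strictAntiOn ⟨hx.1.le, hx.2.le.trans hv'.2⟩ hv' hx.2)
  · -- `B v = -∫ w in v..1, b w` because `B 1 = 0`, and `b < 0` on `(v, 1)`
    have hrest : 0 < ∫ w in v..1, -b w :=
      intervalIntegral_pos_of_pos_on (hb.intervalIntegrable hv' h1).neg (fun x hx =>
        neg_pos.2 ((hb.strictAntiOn hv' ⟨hv'.1.trans hx.1.le, hx.2.le⟩ hx.1).trans hbv)) hv.2
    have hsplit := integral_add_adjacent_intervals (hb.intervalIntegrable h0 hv')
      (hb.intervalIntegrable hv' h1)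
    rw [hb.integral_eq_zero] at hsplit
    rw [intervalIntegral.integral_neg] at hrest
    linarith

theorem zero_lt_apply_zero (hb : IsBalancedDrift b) : 0 < b 0 := by
  have hmono : ∫ w in (0:ℝ)..(1/2), b w ≤ ∫ w in (0:ℝ)..(1/2), b 0 :=
    integral_mono_on (by norm_num) (hb.intervalIntegrable (by norm_num) (by norm_num))
      intervalIntegrable_const fun x hx =>
        hb.strictAntiOn.antitoneOn (left_mem_Icc.2 zero_le_one) ⟨hx.1, by linarith [hx.2]⟩ hx.1
  have := hb.integral_pos (v := 1/2) (by norm_num)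
  rw [intervalIntegral.integral_const, smul_eq_mul] at hmono
  linarith

theorem reflect (hb : IsBalancedDrift b) : IsBalancedDrift (fun v => -b (1 - v)) where
  continuousOn := (hb.continuousOn.comp (by fun_prop) fun v hv => ⟨by linarith [hv.2],
    by linarith [hv.1]⟩).neg
  strictAntiOn x hx y hy hxy := neg_lt_neg (hb.strictAntiOn ⟨by linarith [hy.2], by linarith [hy.1]⟩
    ⟨by linarith [hx.2], by linarith [hx.1]⟩ (by linarith))
  integral_eq_zero := by
    rw [intervalIntegral.integral_neg, integral_comp_sub_left (fun v => b v) 1, sub_self, sub_zero,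
      hb.integral_eq_zero, neg_zero]

theorem integral_reflect (hb : IsBalancedDrift b) {v : ℝ} (hv : v ∈ Icc (0:ℝ) 1) :
    ∫ w in (0:ℝ)..v, -b (1 - w) = ∫ w in (0:ℝ)..(1 - v), b w := by
  have hv' : 1 - v ∈ Icc (0:ℝ) 1 := ⟨by linarith [hv.2], by linarith [hv.1]⟩
  rw [intervalIntegral.integral_neg, integral_comp_sub_left (fun v => b v) 1, sub_zero,
    ← integral_interval_sub_left (hb.intervalIntegrable (left_mem_Icc.2 zero_le_one)
      (right_mem_Icc.2 zero_le_one)) (hb.intervalIntegrable (left_mem_Icc.2 zero_le_one) hv'),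
    hb.integral_eq_zero, zero_sub, neg_neg]

theorem tendsto_integral_div (hb : IsBalancedDrift b) :
    Tendsto (fun v => (∫ w in (0:ℝ)..v, b w) / v) (𝓝[>] 0) (𝓝 (b 0)) := by
  have hIcc : Icc (0:ℝ) 1 ∈ 𝓝[>] (0:ℝ) :=
    mem_of_superset (Ioo_mem_nhdsGT one_pos) Ioo_subset_Icc_self
  have hderiv : HasDerivWithinAt (fun u => ∫ w in (0:ℝ)..u, b w) (b 0) (Ici 0) 0 :=
    integral_hasDerivWithinAt_right IntervalIntegrable.refl (t := Ioi 0)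
      ⟨Icc 0 1, hIcc, hb.continuousOn.aestronglyMeasurable measurableSet_Icc⟩
      ((hb.continuousOn 0 (left_mem_Icc.2 zero_le_one)).mono_of_mem_nhdsWithin hIcc)
  rw [hasDerivWithinAt_iff_tendsto_slope, Ici_sdiff_left] at hderiv
  refine hderiv.congr fun v => ?_
  rw [slope_def_field, integral_same, sub_zero, sub_zero]

theorem continuousOn_weight (hb : IsBalancedDrift b) (σ : ℝ) :
    ContinuousOn (fun v => σ ^ 2 / (2 * ∫ w in (0:ℝ)..v, b w)) (Ioo 0 1) := by
  have hB : ContinuousOn (fun v => ∫ w in (0:ℝ)..v, b w) (Icc 0 1) := by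
    have hint : IntegrableOn b (uIcc 0 1) := by
      rw [uIcc_of_le zero_le_one]
      exact hb.continuousOn.integrableOn_Icc
    simpa only [uIcc_of_le zero_le_one] using continuousOn_primitive_interval hint
  exact continuousOn_const.div (continuousOn_const.mul (hB.mono Ioo_subset_Icc_self))
    fun v hv => by have := hb.integral_pos hv; positivity

theorem tendsto_mul_weight (hb : IsBalancedDrift b) (σ : ℝ) :
    Tendsto (fun v => v * (σ ^ 2 / (2 * ∫ w in (0:ℝ)..v, b w))) (𝓝[>] 0)
      (𝓝 (σ ^ 2 / (2 * b 0))) := by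
  have h := tendsto_const_nhds (x := σ ^ 2).div (hb.tendsto_integral_div.const_mul 2)
    (by have := hb.zero_lt_apply_zero; positivity)
  refine h.congr' ?_
  filter_upwards [self_mem_nhdsWithin] with v (hv : 0 < v)
  simp only [Pi.div_apply]
  field_simp

theorem intervalIntegrable_mul_weight (hb : IsBalancedDrift b) (σ : ℝ) :
    IntervalIntegrable (fun v => v * σ ^ 2 / (2 * ∫ w in (0:ℝ)..v, b w)) volume 0 (1/2) := by
  simp_rw [mul_div_assoc]
  exact intervalIntegrable_of_continuousOn_Ioc_of_tendsto (by norm_num)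
    (continuousOn_id.mul ((hb.continuousOn_weight σ).mono fun v hv => ⟨hv.1, by linarith [hv.2]⟩))
    (hb.tendsto_mul_weight σ)

theorem intervalIntegrable_one_sub_mul_weight (hb : IsBalancedDrift b) (σ : ℝ) :
    IntervalIntegrable (fun v => (1 - v) * σ ^ 2 / (2 * ∫ w in (0:ℝ)..v, b w)) volume (1/2) 1 := by
  have h := (hb.reflect.intervalIntegrable_mul_weight σ).comp_sub_left 1
  rw [sub_zero, show (1:ℝ) - 1 / 2 = 1 / 2 by norm_num] at h
  refine h.symm.congr fun v hv => ?_
  rw [uIoc_of_le (by norm_num)] at hv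
  rw [hb.integral_reflect ⟨by linarith [hv.2], by linarith [hv.1]⟩, sub_sub_cancel]

theorem tendsto_integral_weight_div_log (hb : IsBalancedDrift b) (σ : ℝ) :
    Tendsto (fun u => (∫ v in (1/2:ℝ)..u, σ ^ 2 / (2 * ∫ w in (0:ℝ)..v, b w)) / Real.log u)
      (𝓝[>] 0) (𝓝 (σ ^ 2 / (2 * b 0))) :=
  tendsto_integral_div_log_of_tendsto_mul (by norm_num)
    ((hb.continuousOn_weight σ).mono fun v hv => ⟨hv.1, by linarith [hv.2]⟩)
    (hb.tendsto_mul_weight σ)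

theorem tendsto_integral_weight_div_log_one_sub (hb : IsBalancedDrift b) (σ : ℝ) :
    Tendsto (fun u => (∫ v in (1/2:ℝ)..u, σ ^ 2 / (2 * ∫ w in (0:ℝ)..v, b w)) / Real.log (1 - u))
      (𝓝[<] 1) (𝓝 (σ ^ 2 / (2 * b 1))) := by
  have h := ((hb.reflect.tendsto_integral_weight_div_log σ).comp tendsto_one_sub_nhdsLT_one).neg
  rw [sub_zero, mul_neg, div_neg, neg_neg] at h
  refine h.congr' ?_
  filter_upwards [Ioo_mem_nhdsLT one_pos] with u hu
  have hreflect : ∫ t in (1/2:ℝ)..(1 - u), σ ^ 2 / (2 * ∫ w in (0:ℝ)..t, -b (1 - w))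
      = ∫ t in (1/2:ℝ)..(1 - u), σ ^ 2 / (2 * ∫ w in (0:ℝ)..(1 - t), b w) := by
    refine integral_congr fun t ht => ?_
    have ht' : t ∈ Icc (0:ℝ) 1 := ordConnected_Icc.uIcc_subset (by norm_num)
      ⟨by linarith [hu.2], by linarith [hu.1]⟩ ht
    simp only [hb.integral_reflect ht']
  rw [Function.comp_apply, hreflect, integral_comp_sub_left
    (fun v => σ ^ 2 / (2 * ∫ w in (0:ℝ)..v, b w)) 1, integral_symm, sub_sub_cancel,
    show (1:ℝ) - 1 / 2 = 1 / 2 by norm_num, neg_div, neg_neg]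

theorem eq_add_integral_weight (hb : IsBalancedDrift b) {σ : ℝ}
    {Φ : ℝ → ℝ} (hΦ : ∀ u, Φ u = (∫ v in (0:ℝ)..u, v * σ^2 / (2 * ∫ w in (0:ℝ)..v, b w))
        - ∫ v in u..(1:ℝ), (1 - v) * σ^2 / (2 * ∫ w in (0:ℝ)..v, b w))
    {u : ℝ} (hu : u ∈ Ioo (0:ℝ) 1) :
    Φ u = Φ (1/2) + ∫ v in (1/2:ℝ)..u, σ ^ 2 / (2 * ∫ w in (0:ℝ)..v, b w) := by
  have hψ := (hb.continuousOn_weight σ).mono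
    (ordConnected_Ioo.uIcc_subset (show (1/2:ℝ) ∈ Ioo 0 1 by norm_num) hu)
  have hf : IntervalIntegrable (fun v => v * σ ^ 2 / (2 * ∫ w in (0:ℝ)..v, b w)) volume
      (1/2) u := by
    simp_rw [mul_div_assoc]
    exact (continuousOn_id.mul hψ).intervalIntegrable
  have hg : IntervalIntegrable (fun v => (1 - v) * σ ^ 2 / (2 * ∫ w in (0:ℝ)..v, b w)) volume
      (1/2) u := by
    simp_rw [mul_div_assoc]
    exact ((continuousOn_const.sub continuousOn_id).mul hψ).intervalIntegrable
  rw [hΦ, hΦ, integral_sub_integral_eq_add_integral_add (hb.intervalIntegrable_mul_weight σ) hf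
    (hb.intervalIntegrable_one_sub_mul_weight σ) hg]
  congr 1
  refine integral_congr fun v _ => ?_
  rw [← add_div]
  ring

end IsBalancedDrift

theorem stmt_6 (b : ℝ → ℝ) (σ : ℝ) (hσ : σ ≠ 0)
    (hcont : ContinuousOn b (Set.Icc 0 1))
    (hanti : StrictAntiOn b (Set.Icc 0 1))
    (hB1 : ∫ v in (0:ℝ)..1, b v = 0)
    (Φ : ℝ → ℝ)
    (hΦ : ∀ u, Φ u = (∫ v in (0:ℝ)..u, v * σ^2 / (2 * ∫ w in (0:ℝ)..v, b w))
        - ∫ v in u..(1:ℝ), (1 - v) * σ^2 / (2 * ∫ w in (0:ℝ)..v, b w)) :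
    Tendsto (fun u : ℝ => Φ u / (σ^2 / (2 * b 0) * Real.log u))
      (nhdsWithin 0 (Set.Ioi 0)) (nhds 1) ∧
    Tendsto (fun u : ℝ => Φ u / (σ^2 / (2 * b 1) * Real.log (1 - u)))
      (nhdsWithin 1 (Set.Iio 1)) (nhds 1) := by
  have hb : IsBalancedDrift b := ⟨hcont, hanti, hB1⟩
  have hb0 := hb.zero_lt_apply_zero
  have hb1 : 0 < -b 1 := by simpa using hb.reflect.zero_lt_apply_zero
  constructor
  · refine (tendsto_add_div_mul_of_tendsto_div (Φ (1/2)) (by positivity)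
      Real.tendsto_log_nhdsGT_zero.inv_tendsto_atBot
      (hb.tendsto_integral_weight_div_log σ)).congr' ?_
    filter_upwards [Ioo_mem_nhdsGT one_pos] with u hu
    rw [hb.eq_add_integral_weight hΦ hu]
  · refine (tendsto_add_div_mul_of_tendsto_div (Φ (1/2))
      (div_ne_zero (pow_ne_zero 2 hσ) (by linarith))
      (Real.tendsto_log_nhdsGT_zero.comp tendsto_one_sub_nhdsLT_one).inv_tendsto_atBot
      (hb.tendsto_integral_weight_div_log_one_sub σ)).congr' ?_
    filter_upwards [Ioo_mem_nhdsLT one_pos] with u hu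
    rw [hb.eq_add_integral_weight hΦ hu, Function.comp_apply]
end

section
/- For r in the interval (−2b(0)/σ², −2b(1)/σ²), the Laplace transform of P∞ is finite and equals L∞(r) = ∫₀¹ exp(r Φ(u)) du. -/
/-!
Write `B v = ∫₀^v b`. Strict monotonicity and `B 1 = 0` make `B > 0` on `(0, 1)`, and
`Φ' = σ² / (2 B)` there, so `Φ` is increasing (hence measurable) and the identity is just the
change of variables for the pushforward. For integrability near `0`: `B v ≥ v b(d)` for `v ≤ d`,
so `Φ u ≥ Φ d - σ² / (2 b(d)) · log (d / u)` and `exp (r Φ u) ≤ C u ^ (r σ² / (2 b(d)))`,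
integrable as soon as `r σ² / (2 b(d)) > -1`; by continuity of `b` at `0` such a `d` exists exactly
when `r > -2 b(0) / σ²`. The drift `-b (1 - ·)` satisfies the same hypotheses, exchanges the two
endpoints and turns `Φ` into `-Φ (1 - ·)`, which settles the endpoint `1`.
-/

open MeasureTheory Set Real intervalIntegral Filter Topology

theorem MeasureTheory.IntegrableOn.Ioc_of_continuousOn {f : ℝ → ℝ} {a c d : ℝ}
    (hfd : IntegrableOn f (Ioc a d)) (hf : ContinuousOn f (Icc d c)) : IntegrableOn f (Ioc a c) :=
  (hfd.union hf.integrableOn_Icc).mono_set fun x hx =>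
    (le_or_gt x d).imp (fun h => ⟨hx.1, h⟩) (fun h => ⟨h.le, hx.2⟩)

theorem integrableOn_exp_mul_of_monotoneOn_of_log_le {f : ℝ → ℝ} {c d e r : ℝ} (hd : 0 < d)
    (hde : d ≤ e) (hrc : -1 < r * c) (hf : MonotoneOn f (Ioc 0 e))
    (hlog : ∀ u ∈ Ioc 0 d, f d - c * (log d - log u) ≤ f u) :
    IntegrableOn (fun u => exp (r * f u)) (Ioc 0 e) := by
  set K := exp (r * f d - r * c * log d)
  have hdom : IntegrableOn (fun u => exp (r * f e) + exp (r * f d) + K * u ^ (r * c)) (Ioc 0 e) :=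
    ((integrable_const _).add (integrable_const _)).add
      ((intervalIntegrable_rpow' hrc).const_mul K).1
  have hmeas := (aemeasurable_restrict_of_monotoneOn (μ := volume) measurableSet_Ioc hf).const_mul r
  refine hdom.mono' hmeas.exp.aestronglyMeasurable
    ((ae_restrict_iff' measurableSet_Ioc).2 (Eventually.of_forall fun u hu => ?_))
  have he : e ∈ Ioc 0 e := ⟨hd.trans_le hde, le_rfl⟩
  have hd' : d ∈ Ioc 0 e := ⟨hd, hde⟩
  rw [norm_of_nonneg (exp_pos _).le]
  have hK : 0 ≤ K * u ^ (r * c) := by have := hu.1; positivity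
  have hexp_e := exp_pos (r * f e)
  have hexp_d := exp_pos (r * f d)
  rcases le_or_gt 0 r with hr | hr
  · have := exp_le_exp.2 (mul_le_mul_of_nonneg_left (hf hu he hu.2) hr)
    linarith
  rcases le_or_gt u d with hud | hud
  · have hbound : exp (r * f u) ≤ K * u ^ (r * c) := by
      rw [rpow_def_of_pos hu.1, ← exp_add, exp_le_exp]
      nlinarith [hlog u ⟨hu.1, hud⟩]
    linarith
  · have := exp_le_exp.2 (mul_le_mul_of_nonpos_left (hf hd' hu hud.le) hr.le)
    linarith

namespace Drift

noncomputable def B (b : ℝ → ℝ) (v : ℝ) : ℝ := ∫ w in (0:ℝ)..v, b w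

noncomputable def Φ (b : ℝ → ℝ) (σ u : ℝ) : ℝ :=
  (∫ v in (0:ℝ)..u, v * σ ^ 2 / (2 * B b v)) - ∫ v in u..1, (1 - v) * σ ^ 2 / (2 * B b v)

def reflect (b : ℝ → ℝ) (w : ℝ) : ℝ := -b (1 - w)

variable {b : ℝ → ℝ} {σ : ℝ}

lemma intervalIntegrable_of_antitoneOn (hb : AntitoneOn b (Icc 0 1)) {x y : ℝ}
    (hx : x ∈ Icc (0:ℝ) 1) (hy : y ∈ Icc (0:ℝ) 1) : IntervalIntegrable b volume x y :=
  (hb.mono (uIcc_subset_Icc hx hy)).intervalIntegrable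

lemma zero_lt_apply_zero (hb : StrictAntiOn b (Icc 0 1)) (hB1 : ∫ v in (0:ℝ)..1, b v = 0) :
    0 < b 0 := by
  by_contra! h
  have hpos : 0 < ∫ v in (0:ℝ)..1, -b v :=
    intervalIntegral_pos_of_pos_on
      (intervalIntegrable_of_antitoneOn hb.antitoneOn (by simp) (by simp)).neg
      (fun x hx => by linarith [hb (left_mem_Icc.2 zero_le_one) (Ioo_subset_Icc_self hx) hx.1])
      zero_lt_one
  rw [intervalIntegral.integral_neg, hB1] at hpos
  simp at hpos

lemma mul_apply_le_B (hb : AntitoneOn b (Icc 0 1)) {d v : ℝ} (hd : d ≤ 1)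
    (hv : v ∈ Icc 0 d) : v * b d ≤ B b v := by
  have hv1 : v ∈ Icc (0:ℝ) 1 := ⟨hv.1, hv.2.trans hd⟩
  have h := integral_mono_on hv.1 intervalIntegrable_const
    (intervalIntegrable_of_antitoneOn hb (left_mem_Icc.2 zero_le_one) hv1)
    (fun x hx => hb ⟨hx.1, hx.2.trans hv1.2⟩ ⟨hv.1.trans hv.2, hd⟩ (hx.2.trans hv.2))
  simpa [B] using h

lemma zero_lt_B (hb : StrictAntiOn b (Icc 0 1)) (hB1 : ∫ v in (0:ℝ)..1, b v = 0) {v : ℝ}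
    (hv : v ∈ Ioo 0 1) : 0 < B b v := by
  have hvI : v ∈ Icc (0:ℝ) 1 := Ioo_subset_Icc_self hv
  have h0v := intervalIntegrable_of_antitoneOn hb.antitoneOn (left_mem_Icc.2 zero_le_one) hvI
  have hv1 := intervalIntegrable_of_antitoneOn hb.antitoneOn hvI (right_mem_Icc.2 zero_le_one)
  -- `B v > v * b v` and `B v = -∫ x in v..1, b x > -(1 - v) * b v`; weighting by `1 - v` and `v`
  -- cancels the `b v` terms
  have hleft : 0 < ∫ x in (0:ℝ)..v, (b x - b v) :=
    intervalIntegral_pos_of_pos_on (h0v.sub intervalIntegrable_const)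
      (fun x hx => sub_pos.2 (hb ⟨hx.1.le, hx.2.le.trans hvI.2⟩ hvI hx.2)) hv.1
  have hright : 0 < ∫ x in v..(1:ℝ), (b v - b x) :=
    intervalIntegral_pos_of_pos_on (intervalIntegrable_const.sub hv1)
      (fun x hx => sub_pos.2 (hb hvI ⟨hvI.1.trans hx.1.le, hx.2.le⟩ hx.1)) hv.2
  have hsplit := integral_add_adjacent_intervals h0v hv1
  rw [integral_sub h0v intervalIntegrable_const] at hleft
  rw [integral_sub intervalIntegrable_const hv1] at hright
  simp only [intervalIntegral.integral_const, smul_eq_mul, sub_zero, hB1] at hleft hright hsplit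
  rw [B]
  nlinarith [hv.1, hv.2]

lemma continuousOn_B (hb : AntitoneOn b (Icc 0 1)) : ContinuousOn (B b) (Icc 0 1) := by
  have h := continuousOn_primitive_interval (μ := volume) (f := b) (a := 0) (b := 1)
    (by rw [uIcc_of_le zero_le_one]; exact hb.integrableOn_isCompact isCompact_Icc)
  rwa [uIcc_of_le zero_le_one] at h

lemma continuousOn_div_B (hb : StrictAntiOn b (Icc 0 1)) (hB1 : ∫ v in (0:ℝ)..1, b v = 0)
    {f : ℝ → ℝ} (hf : Continuous f) : ContinuousOn (fun v => f v / (2 * B b v)) (Ioo 0 1) :=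
  hf.continuousOn.div (continuousOn_const.mul ((continuousOn_B hb.antitoneOn).mono
    Ioo_subset_Icc_self)) fun _ hv => by linarith [zero_lt_B hb hB1 hv]

lemma exists_lt_apply_near_zero (hb : ContinuousOn b (Icc 0 1)) {m : ℝ} (hm : m < b 0) :
    ∃ d ∈ Ioc (0:ℝ) (1 / 2), m < b d := by
  have h : ∀ᶠ x in 𝓝[>] (0:ℝ), m < b x := by
    have := (hb 0 (left_mem_Icc.2 zero_le_one)).eventually (lt_mem_nhds hm)
    rw [nhdsWithin_Icc_eq_nhdsGE zero_lt_one] at this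
    exact nhdsWithin_mono _ Ioi_subset_Ici_self this
  obtain ⟨d, hbd, hd⟩ := (h.and (Ioc_mem_nhdsGT (by norm_num : (0:ℝ) < 1 / 2))).exists
  exact ⟨d, hd, hbd⟩

lemma continuousOn_reflect (hb : ContinuousOn b (Icc 0 1)) :
    ContinuousOn (reflect b) (Icc 0 1) :=
  (hb.comp (f := fun x => 1 - x) (continuousOn_const.sub continuousOn_id)
    fun x hx => ⟨by linarith [hx.2], by linarith [hx.1]⟩).neg

lemma strictAntiOn_reflect (hb : StrictAntiOn b (Icc 0 1)) :
    StrictAntiOn (reflect b) (Icc 0 1) := fun x hx y hy hxy => by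
  have := hb ⟨by linarith [hy.2], by linarith [hy.1]⟩ ⟨by linarith [hx.2], by linarith [hx.1]⟩
    (by linarith : 1 - y < 1 - x)
  simp only [reflect]
  linarith

lemma integral_reflect : ∫ v in (0:ℝ)..1, reflect b v = -∫ v in (0:ℝ)..1, b v := by
  simp [reflect, intervalIntegral.integral_comp_sub_left (fun w => b w) 1]

lemma B_reflect (hb : AntitoneOn b (Icc 0 1)) (hB1 : ∫ v in (0:ℝ)..1, b v = 0) {v : ℝ}
    (hv : v ∈ Icc (0:ℝ) 1) : B (reflect b) v = B b (1 - v) := by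
  have h1v : 1 - v ∈ Icc (0:ℝ) 1 := ⟨by linarith [hv.2], by linarith [hv.1]⟩
  have hsplit := integral_add_adjacent_intervals
    (intervalIntegrable_of_antitoneOn hb (left_mem_Icc.2 zero_le_one) h1v)
    (intervalIntegrable_of_antitoneOn hb h1v (right_mem_Icc.2 zero_le_one))
  simp only [B, reflect, intervalIntegral.integral_neg,
    intervalIntegral.integral_comp_sub_left (fun w => b w) 1, sub_zero]
  linarith

lemma Φ_reflect (hb : AntitoneOn b (Icc 0 1)) (hB1 : ∫ v in (0:ℝ)..1, b v = 0) {u : ℝ}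
    (hu : u ∈ Icc (0:ℝ) 1) : Φ (reflect b) σ u = -Φ b σ (1 - u) := by
  have hB : ∀ v ∈ Icc (0:ℝ) 1, B (reflect b) v = B b (1 - v) := fun v hv => B_reflect hb hB1 hv
  have h1 : ∫ v in (0:ℝ)..u, v * σ ^ 2 / (2 * B (reflect b) v)
      = ∫ v in (0:ℝ)..u, (1 - (1 - v)) * σ ^ 2 / (2 * B b (1 - v)) :=
    integral_congr fun v hv => by
      rw [uIcc_of_le hu.1] at hv
      simp [hB v ⟨hv.1, hv.2.trans hu.2⟩]
  have h2 : ∫ v in u..1, (1 - v) * σ ^ 2 / (2 * B (reflect b) v)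
      = ∫ v in u..1, (1 - v) * σ ^ 2 / (2 * B b (1 - v)) :=
    integral_congr fun v hv => by
      rw [uIcc_of_le hu.2] at hv
      rw [hB v ⟨hu.1.trans hv.1, hv.2⟩]
  rw [Φ, Φ, h1, h2, intervalIntegral.integral_comp_sub_left
      (fun v => (1 - v) * σ ^ 2 / (2 * B b v)) 1,
    intervalIntegral.integral_comp_sub_left (fun v => v * σ ^ 2 / (2 * B b v)) 1]
  simp

lemma intervalIntegrable_left_density (hc : ContinuousOn b (Icc 0 1))
    (hb : StrictAntiOn b (Icc 0 1)) (hB1 : ∫ v in (0:ℝ)..1, b v = 0) {u : ℝ} (hu : u ∈ Ico 0 1) :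
    IntervalIntegrable (fun v => v * σ ^ 2 / (2 * B b v)) volume 0 u := by
  obtain ⟨d, hd, hbd⟩ := exists_lt_apply_near_zero hc (zero_lt_apply_zero hb hB1)
  have hd1 : d < 1 := by linarith [hd.2]
  have hcont := continuousOn_div_B hb hB1 (f := fun v => v * σ ^ 2) (by fun_prop)
  have hnear : IntegrableOn (fun v => v * σ ^ 2 / (2 * B b v)) (Ioc 0 d) := by
    refine (integrable_const (σ ^ 2 / (2 * b d))).mono'
      ((hcont.mono fun x hx => ⟨hx.1, hx.2.trans_lt hd1⟩).aestronglyMeasurable measurableSet_Ioc)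
      ((ae_restrict_iff' measurableSet_Ioc).2 (Eventually.of_forall fun v hv => ?_))
    have hB := mul_apply_le_B hb.antitoneOn hd1.le ⟨hv.1.le, hv.2⟩
    have hvb : 0 < v * b d := mul_pos hv.1 hbd
    rw [Real.norm_eq_abs, abs_of_nonneg (div_nonneg (by have := hv.1; positivity) (by linarith)),
      div_le_div_iff₀ (by linarith) (by positivity)]
    nlinarith [mul_le_mul_of_nonneg_left hB (by positivity : (0:ℝ) ≤ 2 * σ ^ 2)]
  rw [intervalIntegrable_iff_integrableOn_Ioc_of_le hu.1]
  exact hnear.Ioc_of_continuousOn (hcont.mono fun x hx => ⟨hd.1.trans_le hx.1, hx.2.trans_lt hu.2⟩)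

lemma intervalIntegrable_right_density (hc : ContinuousOn b (Icc 0 1))
    (hb : StrictAntiOn b (Icc 0 1)) (hB1 : ∫ v in (0:ℝ)..1, b v = 0) {u : ℝ} (hu : u ∈ Ioc 0 1) :
    IntervalIntegrable (fun v => (1 - v) * σ ^ 2 / (2 * B b v)) volume u 1 := by
  have h := (intervalIntegrable_left_density (σ := σ) (continuousOn_reflect hc)
    (strictAntiOn_reflect hb) (by rw [integral_reflect, hB1, neg_zero])
    (u := 1 - u) ⟨by linarith [hu.2], by linarith [hu.1]⟩).comp_sub_left 1
  simp only [sub_zero, sub_sub_cancel] at h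
  refine h.symm.congr fun v hv => ?_
  rw [uIoc_of_le hu.2] at hv
  simp only [sub_sub_cancel,
    B_reflect hb.antitoneOn hB1 (v := 1 - v) ⟨by linarith [hv.2], by linarith [hu.1, hv.1]⟩]

lemma Φ_sub_Φ (hc : ContinuousOn b (Icc 0 1)) (hb : StrictAntiOn b (Icc 0 1))
    (hB1 : ∫ v in (0:ℝ)..1, b v = 0) {a u : ℝ} (ha : a ∈ Ioo 0 1) (hu : u ∈ Ioo 0 1) :
    Φ b σ u - Φ b σ a = ∫ v in a..u, σ ^ 2 / (2 * B b v) := by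
  have hsub : uIcc a u ⊆ Ioo 0 1 := ordConnected_Ioo.uIcc_subset ha hu
  have h1 : IntervalIntegrable (fun v => v * σ ^ 2 / (2 * B b v)) volume a u :=
    ((continuousOn_div_B hb hB1 (by fun_prop)).mono hsub).intervalIntegrable
  have h2 : IntervalIntegrable (fun v => (1 - v) * σ ^ 2 / (2 * B b v)) volume a u :=
    ((continuousOn_div_B hb hB1 (by fun_prop)).mono hsub).intervalIntegrable
  have hleft := integral_add_adjacent_intervals
    (intervalIntegrable_left_density hc hb hB1 ⟨ha.1.le, ha.2⟩) h1
  have hright := integral_add_adjacent_intervals h2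
    (intervalIntegrable_right_density hc hb hB1 ⟨hu.1, hu.2.le⟩)
  have hsum : ∫ v in a..u, σ ^ 2 / (2 * B b v) = (∫ v in a..u, v * σ ^ 2 / (2 * B b v))
      + ∫ v in a..u, (1 - v) * σ ^ 2 / (2 * B b v) := by
    rw [← integral_add h1 h2]
    ring_nf
  rw [Φ, Φ, hsum]
  linarith

lemma monotoneOn_Φ (hc : ContinuousOn b (Icc 0 1)) (hb : StrictAntiOn b (Icc 0 1))
    (hB1 : ∫ v in (0:ℝ)..1, b v = 0) : MonotoneOn (Φ b σ) (Ioo 0 1) := fun a ha u hu hau => by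
  have hnonneg : 0 ≤ ∫ v in a..u, σ ^ 2 / (2 * B b v) := integral_nonneg hau fun v hv => by
    have := zero_lt_B hb hB1 ⟨ha.1.trans_le hv.1, hv.2.trans_lt hu.2⟩
    positivity
  linarith [Φ_sub_Φ (σ := σ) hc hb hB1 ha hu]

lemma Φ_sub_log_le (hc : ContinuousOn b (Icc 0 1)) (hb : StrictAntiOn b (Icc 0 1))
    (hB1 : ∫ v in (0:ℝ)..1, b v = 0) {d u : ℝ} (hd : d < 1) (hbd : 0 < b d)
    (hu : u ∈ Ioc 0 d) : Φ b σ d - σ ^ 2 / (2 * b d) * (log d - log u) ≤ Φ b σ u := by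
  have hd0 : 0 < d := hu.1.trans_le hu.2
  have hsub : uIcc u d ⊆ Ioo 0 1 := ordConnected_Ioo.uIcc_subset ⟨hu.1, hu.2.trans_lt hd⟩ ⟨hd0, hd⟩
  have hle : ∫ v in u..d, σ ^ 2 / (2 * B b v) ≤ ∫ v in u..d, σ ^ 2 / (2 * b d) * v⁻¹ := by
    refine integral_mono_on hu.2
      ((continuousOn_div_B hb hB1 continuous_const).mono hsub).intervalIntegrable
      (continuousOn_const.mul
        (continuousOn_inv₀.mono fun v hv => (hsub hv).1.ne')).intervalIntegrable
      fun v hv => ?_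
    have hv0 : 0 < v := hu.1.trans_le hv.1
    have hB := mul_apply_le_B hb.antitoneOn hd.le ⟨hv0.le, hv.2⟩
    rw [show σ ^ 2 / (2 * b d) * v⁻¹ = σ ^ 2 / (2 * (v * b d)) by field_simp]
    exact div_le_div_of_nonneg_left (sq_nonneg σ) (by positivity) (by linarith)
  rw [intervalIntegral.integral_const_mul, integral_inv_of_pos hu.1 hd0,
    log_div hd0.ne' hu.1.ne'] at hle
  linarith [Φ_sub_Φ (σ := σ) hc hb hB1 ⟨hu.1, hu.2.trans_lt hd⟩ ⟨hd0, hd⟩]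

lemma integrableOn_exp_mul_Φ_Ioc (hσ : σ ≠ 0) (hc : ContinuousOn b (Icc 0 1))
    (hb : StrictAntiOn b (Icc 0 1)) (hB1 : ∫ v in (0:ℝ)..1, b v = 0) {r : ℝ}
    (hr : -2 * b 0 / σ ^ 2 < r) :
    IntegrableOn (fun u => exp (r * Φ b σ u)) (Ioc 0 (1 / 2)) := by
  have hσ2 : 0 < σ ^ 2 := by positivity
  rw [div_lt_iff₀ hσ2] at hr
  obtain ⟨d, hd, hbd⟩ := exists_lt_apply_near_zero hc
    (max_lt (zero_lt_apply_zero hb hB1) (by linarith : -r * σ ^ 2 / 2 < b 0))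
  have hbd0 : 0 < b d := (le_max_left _ _).trans_lt hbd
  have hbdr : -r * σ ^ 2 / 2 < b d := (le_max_right _ _).trans_lt hbd
  have hd1 : d < 1 := by linarith [hd.2]
  refine integrableOn_exp_mul_of_monotoneOn_of_log_le hd.1 hd.2 ?_
    ((monotoneOn_Φ hc hb hB1).mono fun x hx => ⟨hx.1, hx.2.trans_lt (by norm_num)⟩)
    fun u hu => Φ_sub_log_le hc hb hB1 hd1 hbd0 hu
  rw [mul_div_assoc', lt_div_iff₀ (by positivity)]
  linarith

lemma integrableOn_exp_mul_Φ (hσ : σ ≠ 0) (hc : ContinuousOn b (Icc 0 1))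
    (hb : StrictAntiOn b (Icc 0 1)) (hB1 : ∫ v in (0:ℝ)..1, b v = 0) {r : ℝ}
    (hr : r ∈ Ioo (-2 * b 0 / σ ^ 2) (-2 * b 1 / σ ^ 2)) :
    IntegrableOn (fun u => exp (r * Φ b σ u)) (Ioo 0 1) := by
  have hleft : IntervalIntegrable (fun u => exp (r * Φ b σ u)) volume 0 (1 / 2) :=
    (intervalIntegrable_iff_integrableOn_Ioc_of_le (by norm_num)).2
      (integrableOn_exp_mul_Φ_Ioc hσ hc hb hB1 hr.1)
  -- the right half is the left half for the reflected drift, which turns `Φ` into `-Φ (1 - ·)`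
  have hright : IntervalIntegrable (fun u => exp (r * Φ b σ u)) volume (1 / 2) 1 := by
    have hr' : -2 * reflect b 0 / σ ^ 2 < -r := by
      have : -2 * reflect b 0 / σ ^ 2 = -(-2 * b 1 / σ ^ 2) := by rw [reflect, sub_zero]; ring
      linarith [hr.2]
    have h := ((intervalIntegrable_iff_integrableOn_Ioc_of_le (by norm_num)).2
      (integrableOn_exp_mul_Φ_Ioc hσ (continuousOn_reflect hc) (strictAntiOn_reflect hb)
        (by rw [integral_reflect, hB1, neg_zero]) hr')).comp_sub_left 1
    norm_num at h
    refine h.symm.congr fun u hu => ?_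
    rw [uIoc_of_le (by norm_num)] at hu
    simp only [Φ_reflect hb.antitoneOn hB1 (u := 1 - u) ⟨by linarith [hu.2], by linarith [hu.1]⟩,
      sub_sub_cancel, mul_neg, neg_neg]
  exact (intervalIntegrable_iff_integrableOn_Ioo_of_le zero_le_one).1 (hleft.trans hright)

end Drift

theorem stmt_10 (b : ℝ → ℝ) (σ : ℝ) (hσ : σ ≠ 0)
    (hcont : ContinuousOn b (Set.Icc 0 1))
    (hanti : StrictAntiOn b (Set.Icc 0 1))
    (hB1 : ∫ v in (0:ℝ)..1, b v = 0)
    (Φ : ℝ → ℝ)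
    (hΦ : ∀ u, Φ u = (∫ v in (0:ℝ)..u, v * σ^2 / (2 * ∫ w in (0:ℝ)..v, b w))
        - ∫ v in u..(1:ℝ), (1 - v) * σ^2 / (2 * ∫ w in (0:ℝ)..v, b w))
    (P : Measure ℝ)
    (hP : P = Measure.map Φ (volume.restrict (Set.Ioo 0 1)))
    (r : ℝ) (hr : r ∈ Set.Ioo (-2 * b 0 / σ^2) (-2 * b 1 / σ^2)) :
    MeasureTheory.Integrable (fun x : ℝ => Real.exp (r * x)) P ∧
    (∫ x, Real.exp (r * x) ∂P) = ∫ u in (0:ℝ)..1, Real.exp (r * Φ u) := by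
  obtain rfl : Φ = Drift.Φ b σ := funext hΦ
  have hΦmeas : AEMeasurable (Drift.Φ b σ) (volume.restrict (Ioo 0 1)) :=
    aemeasurable_restrict_of_monotoneOn measurableSet_Ioo (Drift.monotoneOn_Φ hcont hanti hB1)
  have hexp : AEStronglyMeasurable (fun x : ℝ => exp (r * x)) P := by fun_prop
  subst hP
  refine ⟨(integrable_map_measure hexp hΦmeas).2
    (Drift.integrableOn_exp_mul_Φ hσ hcont hanti hB1 hr), ?_⟩
  rw [integral_map hΦmeas hexp, integral_of_le zero_le_one, integral_Ioc_eq_integral_Ioo]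
end

section
/- Let α ∈ (0,1). Then for all integers 1 ≤ i ≤ m, the product ∏_{k=i}^{m} 1/(1 − α/k) is bounded by K(α)·(m/i)^α, where K(α) := exp(α + κ(α) α² π²/6) and κ(α) = 1/(2(1−α)²). -/
/-!
Bound each factor by `(1 - x)⁻¹ ≤ exp (x + κ x²)` with `x = α / k ≤ α`, so that the product is at
most `exp (α ∑ 1/k + κ α² ∑ 1/k²)`. The harmonic sum over `[i, m]` is at most `1 + log (m / i)`
and the sum of `1/k²` at most `ζ(2) = π²/6`; exponentiating `α log (m / i)` gives `(m / i)^α`.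
-/

open Real Finset

namespace Real

theorem inv_one_sub_le_exp_add_sq_div {x : ℝ} (hx0 : 0 ≤ x) (hx1 : x < 1) :
    (1 - x)⁻¹ ≤ exp (x + x ^ 2 / (2 * (1 - x))) := by
  set c := x ^ 2 / (2 * (1 - x))
  have h1x : 0 < 1 - x := by linarith
  have hc : c * (2 * (1 - x)) = x ^ 2 := div_mul_cancel₀ _ (by positivity)
  have hc0 : 0 ≤ c := by positivity
  refine le_trans ?_ (quadratic_le_exp_of_nonneg (by positivity : 0 ≤ x + c))
  rw [inv_le_iff_one_le_mul₀' h1x]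
  nlinarith [sq_nonneg c, mul_nonneg h1x.le (sq_nonneg c)]

theorem inv_one_sub_le_exp_of_le {x a : ℝ} (hx0 : 0 ≤ x) (hxa : x ≤ a) (ha1 : a < 1) :
    (1 - x)⁻¹ ≤ exp (x + 1 / (2 * (1 - a) ^ 2) * x ^ 2) := by
  refine (inv_one_sub_le_exp_add_sq_div hx0 (hxa.trans_lt ha1)).trans (exp_le_exp.mpr ?_)
  have h1a : 0 < 1 - a := by linarith
  -- `(1 - a)² ≤ 1 - a ≤ 1 - x`, since `0 ≤ a < 1`
  have hden : 2 * (1 - a) ^ 2 ≤ 2 * (1 - x) := by nlinarith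
  rw [div_eq_mul_one_div (x ^ 2), mul_comm (x ^ 2)]
  gcongr

end Real

theorem sum_Icc_inv_le_inv_add_log {i m : ℕ} (hi : 1 ≤ i) (him : i ≤ m) :
    ∑ k ∈ Icc i m, (k : ℝ)⁻¹ ≤ (i : ℝ)⁻¹ + log ((m : ℝ) / i) := by
  induction m, him using Nat.le_induction with
  | base => simp [div_self (by positivity : (i : ℝ) ≠ 0)]
  | succ n hin ih =>
    have hn : (0 : ℝ) < n := by exact_mod_cast hi.trans hin
    have hi0 : (0 : ℝ) < i := by exact_mod_cast hi
    -- `1 / (n + 1) = 1 - x⁻¹ ≤ log x` for `x = (n + 1) / n`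
    have hstep : ((n : ℝ) + 1)⁻¹ ≤ log (((n : ℝ) + 1) / n) := by
      convert one_sub_inv_le_log_of_pos (by positivity : (0 : ℝ) < ((n : ℝ) + 1) / n) using 1
      field_simp
      ring
    have hlog : log ((n : ℝ) / i) + log (((n : ℝ) + 1) / n) = log (((n : ℝ) + 1) / i) := by
      rw [← log_mul (by positivity) (by positivity)]
      field_simp
    rw [sum_Icc_succ_top (by omega)]
    push_cast
    linarith

theorem sum_Icc_one_div_sq_le_pi_sq_div_six (i m : ℕ) :
    ∑ k ∈ Icc i m, 1 / (k : ℝ) ^ 2 ≤ π ^ 2 / 6 :=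
  hasSum_zeta_two.tsum_eq ▸
    hasSum_zeta_two.summable.sum_le_tsum (Icc i m) (fun _ _ => by positivity)

theorem stmt_14 (α : ℝ) (hα : α ∈ Set.Ioo (0:ℝ) 1) (i m : ℕ) (hi : 1 ≤ i) (him : i ≤ m) :
    (∏ k ∈ Finset.Icc i m, (1 - α / (k:ℝ))⁻¹)
      ≤ Real.exp (α + (1 / (2 * (1 - α)^2)) * α^2 * Real.pi^2 / 6) * ((m:ℝ) / (i:ℝ)) ^ α := by
  obtain ⟨hα0, hα1⟩ := hα
  set κ : ℝ := 1 / (2 * (1 - α) ^ 2)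
  have hx : ∀ k ∈ Icc i m, 0 ≤ α / (k : ℝ) ∧ α / (k : ℝ) ≤ α := fun k hk =>
    ⟨by positivity, div_le_self hα0.le (by exact_mod_cast hi.trans (mem_Icc.mp hk).1)⟩
  have hi0 : (0 : ℝ) < i := by exact_mod_cast hi
  have hm0 : (0 : ℝ) < m := by exact_mod_cast hi.trans him
  calc ∏ k ∈ Icc i m, (1 - α / (k : ℝ))⁻¹
      ≤ ∏ k ∈ Icc i m, exp (α / k + κ * (α / k) ^ 2) :=
        prod_le_prod (fun k hk => inv_nonneg.mpr (by linarith [(hx k hk).2]))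
          fun k hk => inv_one_sub_le_exp_of_le (hx k hk).1 (hx k hk).2 hα1
    _ = exp (α * ∑ k ∈ Icc i m, (k : ℝ)⁻¹ + κ * α ^ 2 * ∑ k ∈ Icc i m, 1 / (k : ℝ) ^ 2) := by
        rw [← exp_sum, mul_sum, mul_sum, ← sum_add_distrib]
        congr 1
        refine sum_congr rfl fun k _ => by ring
    _ ≤ exp (α * (1 + log ((m : ℝ) / i)) + κ * α ^ 2 * (π ^ 2 / 6)) := by
        have hinv : (i : ℝ)⁻¹ ≤ 1 := inv_le_one_of_one_le₀ (by exact_mod_cast hi)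
        gcongr
        · exact (sum_Icc_inv_le_inv_add_log hi him).trans (by linarith)
        · exact sum_Icc_one_div_sq_le_pi_sq_div_six i m
    _ = exp (α + κ * α ^ 2 * π ^ 2 / 6) * ((m : ℝ) / i) ^ α := by
        rw [rpow_def_of_pos (by positivity), ← exp_add]
        ring_nf
end
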